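/- Deflated GMRES convergence bound (Theorem 2): suppose A = V Λ V⁻¹ with V = [v₁, …, v_N] invertible and Λ = diag(λ₁, …, λ_N); let Z := [v₁, …, v_m] (1 ≤ m < N) with M := Zᴴ A Z invertible, and P := I − A Z M⁻¹ Zᴴ. Let V = Q R be a QR factorization of V with Q unitary and R upper triangular, and let R₂₂ denote the lower-right (N−m)×(N−m) block of R (which is invertible). Suppose the undeflated eigenvalues λ_{m+1}, …, λ_N all lie in the ellipse E(c, d, a), which does not contain the origin 0. Then for every j ≥ 1 the j-th GMRES residual for the deflated system P A x = P b, namely ‖r_j‖₂ := min_{ξ ∈ x₀ + K_j(P A, r₀)} ‖P b − P A ξ‖₂ with r₀ := P b − P A x₀, satisfies ‖r_j‖₂ ≤ κ₂(R₂₂) · (C_j(a/d) / |C_j(c/d)|) · ‖r₀‖₂. -/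

import Mathlib

open Matrix

/-- The Euclidean (ℓ²) norm on `ℂ^N`. -/
noncomputable def enorm2 {N : ℕ} (x : Fin N → ℂ) : ℝ :=
  Real.sqrt (∑ i, ‖x i‖ ^ 2)

/-- The `j`-th Krylov subspace `K_j(B, s) = span {s, B s, …, B^{j-1} s}`. -/
noncomputable def krylov {N : ℕ} (B : Matrix (Fin N) (Fin N) ℂ)
    (s : Fin N → ℂ) (j : ℕ) : Submodule ℂ (Fin N → ℂ) :=
  Submodule.span ℂ {v : Fin N → ℂ | ∃ i < j, v = (B ^ i) *ᵥ s}

/-- The spectral (ℓ²-operator) norm of a matrix. -/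
noncomputable def opNorm2 {n : Type*} [Fintype n] [DecidableEq n]
    (W : Matrix n n ℂ) : ℝ :=
  ‖Matrix.toEuclideanCLM (𝕜 := ℂ) W‖

/-- The ℓ²-condition number `κ₂(W) = ‖W‖₂ ‖W⁻¹‖₂`. -/
noncomputable def cond2 {n : Type*} [Fintype n] [DecidableEq n]
    (W : Matrix n n ℂ) : ℝ :=
  opNorm2 W * opNorm2 W⁻¹

/-- The closed ellipse `E(c, d, a)` in the complex plane with center `c`,
focal distance `d`, and semi-major axis `a`. -/
def ellipseE (c d a : ℝ) : Set ℂ :=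
  {z : ℂ | ‖z - ((c : ℂ) - (d : ℂ))‖ +
      ‖z - ((c : ℂ) + (d : ℂ))‖ ≤ 2 * a}

/-
Every polynomial `p` of degree `≤ j` with `p(0) = 1` gives an iterate `x₀ + k`,
`k ∈ K_j(PA, r₀)`, with residual `p(PA) r₀`; take `p(z) = T_j((c - z)/d) / T_j(c/d)`.
For `i ≥ m` the `i`-th row of `V⁻¹` annihilates `Z`, so `P` fixes it and it is a left
eigenvector of `PA` for `λ_i`: the trailing `V`-coordinates of `p(PA) r₀` are `p(λ_i)` times
those of `r₀`. Every residual is orthogonal to `range Z`, which is spanned by the first `m`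
columns of `Q`, so its norm is that of the trailing block of `Qᴴ r = R V⁻¹ r`, i.e. of `R₂₂`
applied to its trailing `V`-coordinates. Hence `‖r_j‖ ≤ κ₂(R₂₂) maxᵢ |p(λ_i)| ‖r₀‖`.
Finally, writing `w = cos θ`, the ellipse with foci `±1` through `w` has semi-major axis
`cosh (Im θ)` and `|T_j(w)| = |cos (jθ)| ≤ cosh (j Im θ)`, which bounds `|p|` on `E(c, d, a)`
by `T_j(a/d) / |T_j(c/d)|`.
-/

open Polynomial

namespace Complex

lemma norm_cos_add_ofReal_of_sq_eq_one (θ : ℂ) {ε : ℝ} (hε : ε ^ 2 = 1) :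
    ‖cos θ + ε‖ = Real.cosh θ.im + ε * Real.cos θ.re := by
  have hθ : cos θ + ε = ↑(Real.cos θ.re * Real.cosh θ.im + ε) +
      ↑(-(Real.sin θ.re * Real.sinh θ.im)) * I := by
    conv_lhs => rw [← re_add_im θ, cos_add_mul_I]
    simp only [← ofReal_cos, ← ofReal_sin, ← ofReal_cosh, ← ofReal_sinh]
    push_cast; ring
  have hε1 : |ε| = 1 := by nlinarith [sq_abs ε, abs_nonneg ε]
  have hnonneg : 0 ≤ Real.cosh θ.im + ε * Real.cos θ.re := by
    have := Real.one_le_cosh θ.im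
    have : |ε * Real.cos θ.re| ≤ 1 := by
      rw [abs_mul, hε1, one_mul]; exact Real.abs_cos_le_one _
    linarith [neg_abs_le (ε * Real.cos θ.re)]
  rw [hθ, norm_add_mul_I, Real.sqrt_eq_iff_eq_sq (by positivity) hnonneg]
  nlinarith [Real.cosh_sq θ.im, Real.sin_sq_add_cos_sq θ.re]

lemma norm_cos_sub_one_add_norm_cos_add_one (θ : ℂ) :
    ‖cos θ - 1‖ + ‖cos θ + 1‖ = 2 * Real.cosh θ.im := by
  have hsub := norm_cos_add_ofReal_of_sq_eq_one θ (ε := -1) (by norm_num)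
  have hadd := norm_cos_add_ofReal_of_sq_eq_one θ (ε := 1) (by norm_num)
  push_cast at hsub hadd
  rw [← sub_eq_add_neg] at hsub
  rw [hsub, hadd]; ring

lemma norm_cos_le_cosh_im (θ : ℂ) : ‖cos θ‖ ≤ Real.cosh θ.im := by
  have h := norm_add_le (cos θ - 1) (cos θ + 1)
  rw [show cos θ - 1 + (cos θ + 1) = 2 * cos θ by ring, norm_mul, Complex.norm_two,
    norm_cos_sub_one_add_norm_cos_add_one] at h
  linarith

end Complex

namespace Polynomial.Chebyshev

theorem norm_eval_T_le_of_norm_sub_one_add_norm_add_one_le (n : ℤ) {w : ℂ} {ρ : ℝ}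
    (hw : ‖w - 1‖ + ‖w + 1‖ ≤ 2 * ρ) : ‖(T ℂ n).eval w‖ ≤ (T ℝ n).eval ρ := by
  obtain ⟨θ, rfl⟩ := Complex.cos_surjective w
  rw [Complex.norm_cos_sub_one_add_norm_cos_add_one] at hw
  have hcosh : Real.cosh θ.im ≤ ρ := by linarith
  have hρ : 1 ≤ ρ := (Real.one_le_cosh _).trans hcosh
  have him : |θ.im| ≤ Real.arcosh ρ := by
    rw [← abs_of_nonneg (Real.arcosh_nonneg hρ), ← Real.cosh_le_cosh, Real.cosh_arcosh hρ]
    exact hcosh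
  rw [T_complex_cos, ← Real.cosh_arcosh hρ, T_real_cosh]
  calc ‖Complex.cos (n * θ)‖ ≤ Real.cosh (n * θ.im) := by
        simpa using Complex.norm_cos_le_cosh_im (n * θ)
    _ ≤ Real.cosh (n * Real.arcosh ρ) := by
        rw [Real.cosh_le_cosh, abs_mul, abs_mul, abs_of_nonneg (Real.arcosh_nonneg hρ)]
        gcongr

end Polynomial.Chebyshev

noncomputable def chebyshevResidualPoly (c d : ℝ) (n : ℕ) : ℂ[X] :=
  C (((Chebyshev.T ℝ n).eval (c / d) : ℝ) : ℂ)⁻¹ *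
    (Chebyshev.T ℂ n).comp (C ((c : ℂ) / d) - C (d : ℂ)⁻¹ * X)

namespace chebyshevResidualPoly

variable (c d : ℝ) (n : ℕ)

lemma eval_eq (z : ℂ) :
    (chebyshevResidualPoly c d n).eval z =
      (((Chebyshev.T ℝ n).eval (c / d) : ℝ) : ℂ)⁻¹ * (Chebyshev.T ℂ n).eval ((c - z) / d) := by
  simp only [chebyshevResidualPoly, eval_mul, eval_C, eval_comp, eval_sub, eval_X]
  ring_nf

lemma eval_zero (hτ : (Chebyshev.T ℝ n).eval (c / d) ≠ 0) :
    (chebyshevResidualPoly c d n).eval 0 = 1 := by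
  rw [eval_eq, sub_zero, ← Complex.ofReal_div, ← Chebyshev.complex_ofReal_eval_T]
  exact inv_mul_cancel₀ (Complex.ofReal_ne_zero.2 hτ)

lemma natDegree_le : (chebyshevResidualPoly c d n).natDegree ≤ n := by
  refine (natDegree_C_mul_le _ _).trans ?_
  refine natDegree_comp_le.trans ?_
  rw [Chebyshev.natDegree_T, Int.natAbs_natCast]
  have : (C ((c : ℂ) / d) - C (d : ℂ)⁻¹ * X).natDegree ≤ 1 := by compute_degree
  simpa using Nat.mul_le_mul_left n this

lemma norm_eval_le {a : ℝ} (hd : 0 < d) {z : ℂ} (hz : z ∈ ellipseE c d a) :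
    ‖(chebyshevResidualPoly c d n).eval z‖ ≤
      (Chebyshev.T ℝ n).eval (a / d) / |(Chebyshev.T ℝ n).eval (c / d)| := by
  have hd' : (d : ℂ) ≠ 0 := Complex.ofReal_ne_zero.2 hd.ne'
  have hw : ‖(c - z) / d - 1‖ + ‖(c - z) / d + 1‖ ≤ 2 * (a / d) := by
    rw [show (c - z) / d - 1 = -(z - (c - d)) / d by field_simp; ring,
      show (c - z) / d + 1 = -(z - (c + d)) / d by field_simp; ring,
      norm_div, norm_div, norm_neg, norm_neg, Complex.norm_real, Real.norm_of_nonneg hd.le,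
      ← add_div, mul_div_assoc']
    exact div_le_div_of_nonneg_right hz hd.le
  rw [eval_eq, norm_mul, norm_inv, Complex.norm_real, Real.norm_eq_abs, inv_mul_eq_div]
  gcongr
  exact Chebyshev.norm_eval_T_le_of_norm_sub_one_add_norm_add_one_le n hw

end chebyshevResidualPoly

lemma lt_abs_of_zero_notMem_ellipseE {c d a : ℝ} (hda : d ≤ a)
    (h0 : (0 : ℂ) ∉ ellipseE c d a) : d < |c| := by
  simp only [ellipseE, Set.mem_ofPred_eq, zero_sub, norm_neg, not_le] at h0
  rw [← Complex.ofReal_sub, ← Complex.ofReal_add, Complex.norm_real, Complex.norm_real,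
    Real.norm_eq_abs, Real.norm_eq_abs] at h0
  by_contra! hc
  rw [abs_le] at hc
  rw [abs_of_nonpos (by linarith : c - d ≤ 0), abs_of_nonneg (by linarith : 0 ≤ c + d)] at h0
  linarith

section Norms

variable {N : ℕ}

lemma enorm2_eq_norm_toLp (x : Fin N → ℂ) : enorm2 x = ‖WithLp.toLp 2 x‖ := by
  rw [EuclideanSpace.norm_eq]; rfl

lemma enorm2_nonneg (x : Fin N → ℂ) : 0 ≤ enorm2 x := Real.sqrt_nonneg _

lemma cond2_nonneg {n : Type*} [Fintype n] [DecidableEq n] (W : Matrix n n ℂ) : 0 ≤ cond2 W :=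
  mul_nonneg (norm_nonneg _) (norm_nonneg _)

lemma enorm2_mulVec_le (W : Matrix (Fin N) (Fin N) ℂ) (x : Fin N → ℂ) :
    enorm2 (W *ᵥ x) ≤ opNorm2 W * enorm2 x := by
  rw [enorm2_eq_norm_toLp, enorm2_eq_norm_toLp]
  exact (Matrix.toEuclideanCLM (𝕜 := ℂ) W).le_opNorm (WithLp.toLp 2 x)

lemma enorm2_mulVec_of_mem_unitaryGroup {U : Matrix (Fin N) (Fin N) ℂ}
    (hU : U ∈ Matrix.unitaryGroup (Fin N) ℂ) (x : Fin N → ℂ) : enorm2 (U *ᵥ x) = enorm2 x := by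
  rw [enorm2_eq_norm_toLp, enorm2_eq_norm_toLp]
  refine (Matrix.toEuclideanCLM (𝕜 := ℂ) U).norm_map_of_mem_unitary ?_ (WithLp.toLp 2 x)
  rw [Unitary.mem_iff] at hU ⊢
  simp only [← map_star, ← map_mul, hU.1, hU.2, map_one, and_self]

lemma enorm2_comp_of_eq_zero {k : ℕ} {f : Fin k → Fin N} (hf : Function.Injective f)
    {x : Fin N → ℂ} (hx : ∀ t ∉ Set.range f, x t = 0) : enorm2 (x ∘ f) = enorm2 x := by
  unfold enorm2
  congr 1
  exact Fintype.sum_of_injective f hf _ _ (fun t ht => by simp [hx t ht]) fun _ => rfl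

open scoped Matrix.Norms.L2Operator in
lemma opNorm2_diagonal (v : Fin N → ℂ) : opNorm2 (Matrix.diagonal v) = ‖v‖ :=
  Matrix.l2_opNorm_diagonal v

lemma enorm2_mulVec_diagonal_mulVec_le {W : Matrix (Fin N) (Fin N) ℂ} (hW : IsUnit W.det)
    (v y : Fin N → ℂ) :
    enorm2 (W *ᵥ (Matrix.diagonal v *ᵥ y)) ≤ cond2 W * ‖v‖ * enorm2 (W *ᵥ y) := by
  have hy : y = W⁻¹ *ᵥ (W *ᵥ y) := by
    rw [Matrix.mulVec_mulVec, Matrix.nonsing_inv_mul W hW, Matrix.one_mulVec]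
  calc enorm2 (W *ᵥ (Matrix.diagonal v *ᵥ y))
      ≤ opNorm2 W * (‖v‖ * enorm2 y) := by
        grw [enorm2_mulVec_le, enorm2_mulVec_le, opNorm2_diagonal]
        exact norm_nonneg _
    _ ≤ opNorm2 W * (‖v‖ * (opNorm2 W⁻¹ * enorm2 (W *ᵥ y))) := by
        grw [← enorm2_mulVec_le, ← hy]
        exact norm_nonneg _
    _ = cond2 W * ‖v‖ * enorm2 (W *ᵥ y) := by rw [cond2]; ring

end Norms

namespace Matrix.BlockTriangular

variable {α β K : Type*} [LinearOrder α] [Fintype α] [CommRing K]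
  {R : Matrix α α K}

lemma comp_mulVec_eq_submatrix_mulVec (hR : R.BlockTriangular id) [Fintype β] {f : β → α}
    (hf : Function.Injective f) (hup : IsUpperSet (Set.range f)) (x : α → K) :
    (R *ᵥ x) ∘ f = R.submatrix f f *ᵥ (x ∘ f) := by
  funext i
  refine (Fintype.sum_of_injective f hf _ _ (fun t ht => ?_) fun _ => rfl).symm
  dsimp only
  rw [hR (lt_of_not_ge fun h => ht (hup h ⟨i, rfl⟩)), zero_mul]

lemma isUnit_det_submatrix [DecidableEq α] (hR : R.BlockTriangular id) (hdet : IsUnit R.det)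
    [LinearOrder β] [Fintype β] [DecidableEq β] {f : β → α} (hf : StrictMono f) :
    IsUnit (R.submatrix f f).det := by
  have hsub : (R.submatrix f f).BlockTriangular id := fun _ _ hij => hR (hf hij)
  rw [det_of_isUpperTriangular hR, IsUnit.prod_univ_iff] at hdet
  rw [det_of_isUpperTriangular hsub, IsUnit.prod_univ_iff]
  exact fun i => hdet (f i)

lemma eq_zero_of_conjTranspose_mulVec_eq_zero [DecidableEq α] [StarRing K]
    (hR : R.BlockTriangular id) (hdet : IsUnit R.det) {s : Set α} (hs : IsLowerSet s) {w : α → K}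
    (hw : ∀ i ∈ s, (Rᴴ *ᵥ w) i = 0) : ∀ i ∈ s, w i = 0 := by
  let := R.invertibleOfIsUnitDet hdet
  have hinv : R⁻¹.BlockTriangular id := blockTriangular_inv_of_blockTriangular hR
  have hw' : w = R⁻¹ᴴ *ᵥ (Rᴴ *ᵥ w) := by
    rw [mulVec_mulVec, ← conjTranspose_mul, mul_nonsing_inv R hdet, conjTranspose_one,
      one_mulVec]
  intro i hi
  rw [hw']
  refine Finset.sum_eq_zero fun t _ => ?_
  dsimp only
  rcases le_or_gt t i with hti | hit
  · rw [hw t (hs hti hi), mul_zero]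
  · rw [conjTranspose_apply, hinv hit, star_zero, zero_mul]

end Matrix.BlockTriangular

section Krylov

variable {N : ℕ} (B : Matrix (Fin N) (Fin N) ℂ)

lemma aeval_mulVec_mem_krylov (s : Fin N → ℂ) {j : ℕ} {q : ℂ[X]} (hq : q.degree < j) :
    aeval B q *ᵥ s ∈ krylov B s j := by
  rw [aeval_eq_sum_range, Matrix.sum_mulVec]
  refine Submodule.sum_mem _ fun i _ => ?_
  rw [Matrix.smul_mulVec]
  by_cases hi : i < j
  · exact Submodule.smul_mem _ _ (Submodule.subset_span ⟨i, hi, rfl⟩)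
  · rw [(degree_lt_iff_coeff_zero q j).1 hq i (not_lt.1 hi), zero_smul]
    exact zero_mem _

lemma exists_mem_krylov_sub_mulVec_eq_aeval (f x₀ : Fin N → ℂ) {j : ℕ} {p : ℂ[X]}
    (hp0 : p.eval 0 = 1) (hpj : p.natDegree ≤ j) :
    ∃ k ∈ krylov B (f - B *ᵥ x₀) j,
      f - B *ᵥ (x₀ + k) = aeval B p *ᵥ (f - B *ᵥ x₀) := by
  refine ⟨-(aeval B p.divX *ᵥ (f - B *ᵥ x₀)), neg_mem (aeval_mulVec_mem_krylov B _ ?_), ?_⟩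
  · refine (degree_lt_iff_coeff_zero _ _).2 fun i hi => ?_
    rw [coeff_divX]
    exact coeff_eq_zero_of_natDegree_lt (by omega)
  · have hp : aeval B p = B * aeval B p.divX + 1 := by
      conv_lhs => rw [← X_mul_divX_add p]
      simp [coeff_zero_eq_eval_zero, hp0]
    rw [hp, Matrix.add_mulVec, ← Matrix.mulVec_mulVec, Matrix.one_mulVec, Matrix.mulVec_add,
      Matrix.mulVec_neg]
    abel

end Krylov

section Eigenvector

variable {n K : Type*} [Fintype n] [DecidableEq n] [CommRing K] {B : Matrix n n K}
  {w : n → K} {μ : K}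

lemma vecMul_pow_of_vecMul_eq_smul (h : w ᵥ* B = μ • w) (k : ℕ) : w ᵥ* B ^ k = μ ^ k • w := by
  induction k with
  | zero => simp
  | succ k ih =>
    rw [pow_succ, ← Matrix.vecMul_vecMul, ih, Matrix.smul_vecMul, h, smul_smul, pow_succ]

lemma vecMul_aeval_of_vecMul_eq_smul (h : w ᵥ* B = μ • w) (p : K[X]) :
    w ᵥ* aeval B p = p.eval μ • w := by
  induction p using Polynomial.induction_on' with
  | add p q hp hq => rw [map_add, Matrix.vecMul_add, hp, hq, eval_add, add_smul]
  | monomial k a =>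
    rw [aeval_monomial, eval_monomial, Algebra.algebraMap_eq_smul_one, smul_mul_assoc, one_mul,
      Matrix.vecMul_smul, vecMul_pow_of_vecMul_eq_smul h, smul_smul]

end Eigenvector

noncomputable def deflationProj {n k K : Type*} [Fintype n] [DecidableEq n] [Fintype k]
    [DecidableEq k] [CommRing K] [StarRing K] (A : Matrix n n K) (Z : Matrix n k K) :
    Matrix n n K :=
  1 - A * Z * (Zᴴ * A * Z)⁻¹ * Zᴴ

section Deflation

variable {n k K : Type*} [Fintype n] [DecidableEq n] [Fintype k] [DecidableEq k] [CommRing K]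
  [StarRing K] {A : Matrix n n K} {Z : Matrix n k K}

lemma conjTranspose_mul_deflationProj (hM : IsUnit (Zᴴ * A * Z)) :
    Zᴴ * deflationProj A Z = 0 := by
  have hMM := Matrix.mul_nonsing_inv _ ((Matrix.isUnit_iff_isUnit_det _).1 hM)
  calc Zᴴ * deflationProj A Z = Zᴴ - Zᴴ * A * Z * (Zᴴ * A * Z)⁻¹ * Zᴴ := by
        simp only [deflationProj, Matrix.mul_sub, Matrix.mul_one, Matrix.mul_assoc]
    _ = 0 := by rw [hMM, Matrix.one_mul, sub_self]

lemma conjTranspose_mulVec_deflationProj_residual (hM : IsUnit (Zᴴ * A * Z)) (b ξ : n → K) :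
    Zᴴ *ᵥ (deflationProj A Z *ᵥ b - (deflationProj A Z * A) *ᵥ ξ) = 0 := by
  rw [Matrix.mulVec_sub, Matrix.mulVec_mulVec, Matrix.mulVec_mulVec, ← Matrix.mul_assoc,
    conjTranspose_mul_deflationProj hM, Matrix.zero_mul, Matrix.zero_mulVec, Matrix.zero_mulVec,
    sub_self]

lemma vecMul_deflationProj_mul {w : n → K} {μ : K} (hwA : w ᵥ* A = μ • w) (hwZ : w ᵥ* Z = 0) :
    w ᵥ* (deflationProj A Z * A) = μ • w := by
  have hwP : w ᵥ* deflationProj A Z = w := by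
    rw [deflationProj, Matrix.vecMul_sub, Matrix.vecMul_one, ← Matrix.vecMul_vecMul,
      ← Matrix.vecMul_vecMul, ← Matrix.vecMul_vecMul, hwA, Matrix.smul_vecMul, hwZ, smul_zero,
      Matrix.zero_vecMul, Matrix.zero_vecMul, sub_zero]
  rw [← Matrix.vecMul_vecMul, hwP, hwA]

end Deflation

namespace Fin

variable {m N : ℕ} (h : m ≤ N)

def natAddSub (i : Fin (N - m)) : Fin N :=
  Fin.cast (Nat.add_sub_cancel' h) (Fin.natAdd m i)

lemma natAddSub_strictMono : StrictMono (natAddSub h) := fun i j hij => by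
  rw [Fin.lt_def] at hij ⊢
  change m + (i : ℕ) < m + j
  omega

lemma mem_range_natAddSub {t : Fin N} : t ∈ Set.range (natAddSub h) ↔ m ≤ t :=
  ⟨by rintro ⟨i, rfl⟩; exact Nat.le_add_right m i,
    fun ht => ⟨⟨t - m, by omega⟩, Fin.ext (by change m + (t - m) = t; omega)⟩⟩

lemma isUpperSet_range_natAddSub : IsUpperSet (Set.range (natAddSub h)) := fun s t hst hs => by
  rw [mem_range_natAddSub] at hs ⊢
  exact hs.trans hst

end Fin
section DeflatedGMRES

variable {N m : ℕ} (hmN : m ≤ N) {A V : Matrix (Fin N) (Fin N) ℂ}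
  {Z : Matrix (Fin N) (Fin m) ℂ}

lemma inv_mulVec_aeval_deflationProj_apply (hV : IsUnit V) {l : Fin N → ℂ}
    (hA : A = V * Matrix.diagonal l * V⁻¹)
    (hZ : Z = Matrix.of fun i j => V i (Fin.castLE hmN j)) (p : ℂ[X]) (r : Fin N → ℂ)
    {i : Fin N} (hi : m ≤ (i : ℕ)) :
    (V⁻¹ *ᵥ (aeval (deflationProj A Z * A) p *ᵥ r)) i = p.eval (l i) * (V⁻¹ *ᵥ r) i := by
  have hVV : V⁻¹ * V = 1 := Matrix.nonsing_inv_mul V ((Matrix.isUnit_iff_isUnit_det V).1 hV)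
  have hwA : V⁻¹ i ᵥ* A = l i • V⁻¹ i := by
    rw [← Matrix.mul_apply_eq_vecMul, hA, ← Matrix.mul_assoc, ← Matrix.mul_assoc, hVV,
      Matrix.one_mul]
    ext t
    simp [Matrix.diagonal_mul]
  have hwZ : V⁻¹ i ᵥ* Z = 0 := by
    funext j
    subst hZ
    change (V⁻¹ * V) i (Fin.castLE hmN j) = 0
    exact (congrFun (congrFun hVV i) _).trans
      (Matrix.one_apply_ne (ne_of_gt (by rw [Fin.lt_def, Fin.val_castLE]; omega)))
  change V⁻¹ i ⬝ᵥ (aeval (deflationProj A Z * A) p *ᵥ r) = p.eval (l i) * (V⁻¹ i ⬝ᵥ r)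
  rw [Matrix.dotProduct_mulVec, vecMul_aeval_of_vecMul_eq_smul (vecMul_deflationProj_mul hwA hwZ),
    smul_dotProduct, smul_eq_mul]

lemma enorm2_eq_enorm2_submatrix_mulVec (hV : IsUnit V) {Q R : Matrix (Fin N) (Fin N) ℂ}
    (hQR : V = Q * R) (hQ : Q ∈ Matrix.unitaryGroup (Fin N) ℂ) (hR : R.BlockTriangular id)
    (hZ : Z = Matrix.of fun i j => V i (Fin.castLE hmN j)) {s : Fin N → ℂ} (hs : Zᴴ *ᵥ s = 0) :
    enorm2 s = enorm2 (R.submatrix (Fin.natAddSub hmN) (Fin.natAddSub hmN) *ᵥ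
      ((V⁻¹ *ᵥ s) ∘ Fin.natAddSub hmN)) := by
  have hVdet := (Matrix.isUnit_iff_isUnit_det V).1 hV
  have hRdet : IsUnit R.det := isUnit_of_mul_isUnit_right (by rwa [← Matrix.det_mul, ← hQR])
  have hQ' : Qᴴ ∈ Matrix.unitaryGroup (Fin N) ℂ := Unitary.star_mem hQ
  have hQs : Qᴴ *ᵥ s = R *ᵥ (V⁻¹ *ᵥ s) := by
    have hR' : R = Qᴴ * V := by
      rw [hQR, ← Matrix.mul_assoc, ← Matrix.star_eq_conjTranspose, Unitary.star_mul_self_of_mem hQ,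
        Matrix.one_mul]
    rw [hR', Matrix.mulVec_mulVec, Matrix.mul_assoc, Matrix.mul_nonsing_inv V hVdet, Matrix.mul_one]
  have htop : ∀ t ∉ Set.range (Fin.natAddSub hmN), (Qᴴ *ᵥ s) t = 0 := by
    refine hR.eq_zero_of_conjTranspose_mulVec_eq_zero hRdet
      (Fin.isUpperSet_range_natAddSub hmN).compl fun t ht => ?_
    have htm : (t : ℕ) < m := not_le.1 fun h => ht ((Fin.mem_range_natAddSub hmN).2 h)
    rw [Matrix.mulVec_mulVec, ← Matrix.conjTranspose_mul, ← hQR]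
    subst hZ
    -- `Zᴴ *ᵥ s` is, by definition, the restriction of `Vᴴ *ᵥ s` to the first `m` indices
    exact congrFun hs ⟨t, htm⟩
  rw [← enorm2_mulVec_of_mem_unitaryGroup hQ' s,
    ← enorm2_comp_of_eq_zero (Fin.natAddSub_strictMono hmN).injective htop, hQs,
    hR.comp_mulVec_eq_submatrix_mulVec (Fin.natAddSub_strictMono hmN).injective
      (Fin.isUpperSet_range_natAddSub hmN)]

lemma sInf_residual_deflationProj_le (hV : IsUnit V) {l : Fin N → ℂ}
    (hA : A = V * Matrix.diagonal l * V⁻¹)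
    (hZ : Z = Matrix.of fun i j => V i (Fin.castLE hmN j)) (hM : IsUnit (Zᴴ * A * Z))
    {Q R : Matrix (Fin N) (Fin N) ℂ} (hQR : V = Q * R) (hQ : Q ∈ Matrix.unitaryGroup (Fin N) ℂ)
    (hR : R.BlockTriangular id) (b x₀ : Fin N → ℂ) {j : ℕ} {p : ℂ[X]} (hp0 : p.eval 0 = 1)
    (hpj : p.natDegree ≤ j) :
    sInf {t : ℝ | ∃ ξ : Fin N → ℂ,
        (∃ k ∈ krylov (deflationProj A Z * A)
          (deflationProj A Z *ᵥ b - (deflationProj A Z * A) *ᵥ x₀) j, ξ = x₀ + k) ∧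
          t = enorm2 (deflationProj A Z *ᵥ b - (deflationProj A Z * A) *ᵥ ξ)} ≤
      cond2 (R.submatrix (Fin.natAddSub hmN) (Fin.natAddSub hmN)) *
        ‖fun i => p.eval (l (Fin.natAddSub hmN i))‖ *
        enorm2 (deflationProj A Z *ᵥ b - (deflationProj A Z * A) *ᵥ x₀) := by
  set P := deflationProj A Z
  set e := Fin.natAddSub hmN
  have hRdet : IsUnit R.det := isUnit_of_mul_isUnit_right
    (by rw [← Matrix.det_mul, ← hQR]; exact (Matrix.isUnit_iff_isUnit_det V).1 hV)
  have hnorm := fun ξ => enorm2_eq_enorm2_submatrix_mulVec hmN hV hQR hQ hR hZ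
    (conjTranspose_mulVec_deflationProj_residual hM b ξ)
  obtain ⟨k, hk, hres⟩ := exists_mem_krylov_sub_mulVec_eq_aeval (P * A) (P *ᵥ b) x₀ hp0 hpj
  have hcoord : (V⁻¹ *ᵥ (P *ᵥ b - (P * A) *ᵥ (x₀ + k))) ∘ e =
      Matrix.diagonal (fun i => p.eval (l (e i))) *ᵥ ((V⁻¹ *ᵥ (P *ᵥ b - (P * A) *ᵥ x₀)) ∘ e) := by
    funext i
    rw [Matrix.mulVec_diagonal, Function.comp_apply, hres,
      inv_mulVec_aeval_deflationProj_apply hmN hV hA hZ p _ (Nat.le_add_right m i)]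
    rfl
  refine csInf_le_of_le ⟨0, ?_⟩ ⟨x₀ + k, ⟨k, hk, rfl⟩, rfl⟩ ?_
  · rintro t ⟨ξ, -, rfl⟩
    exact enorm2_nonneg _
  rw [hnorm, hnorm, hcoord]
  exact enorm2_mulVec_diagonal_mulVec_le
    (hR.isUnit_det_submatrix hRdet (Fin.natAddSub_strictMono hmN)) _ _

end DeflatedGMRES

theorem deflated_gmres_convergence_bound_ellipse_general
    (N m : ℕ) (hmN : m < N)
    (A V : Matrix (Fin N) (Fin N) ℂ) (l : Fin N → ℂ)
    (hV : IsUnit V) (hA : A = V * Matrix.diagonal l * V⁻¹)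
    (Z : Matrix (Fin N) (Fin m) ℂ)
    (hZ : Z = Matrix.of fun (i : Fin N) (j : Fin m) => V i (Fin.castLE hmN.le j))
    (M : Matrix (Fin m) (Fin m) ℂ) (hM : M = Zᴴ * A * Z) (hMinv : IsUnit M)
    (P : Matrix (Fin N) (Fin N) ℂ) (hP : P = 1 - A * Z * M⁻¹ * Zᴴ)
    (Q R : Matrix (Fin N) (Fin N) ℂ)
    (hQR : V = Q * R) (hQ : Q ∈ Matrix.unitaryGroup (Fin N) ℂ)
    (hR : R.BlockTriangular (id : Fin N → Fin N))
    (R₂₂ : Matrix (Fin (N - m)) (Fin (N - m)) ℂ)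
    (hR₂₂ : R₂₂ = R.submatrix
      (fun i : Fin (N - m) => Fin.cast (Nat.add_sub_cancel' hmN.le) (Fin.natAdd m i))
      (fun i : Fin (N - m) => Fin.cast (Nat.add_sub_cancel' hmN.le) (Fin.natAdd m i)))
    (c d a : ℝ) (hd : 0 < d) (hda : d ≤ a)
    (heig : ∀ i : Fin N, m ≤ (i : ℕ) → l i ∈ ellipseE c d a)
    (h0 : (0 : ℂ) ∉ ellipseE c d a)
    (b x₀ : Fin N → ℂ) (r₀ : Fin N → ℂ)
    (hr₀ : r₀ = P *ᵥ b - (P * A) *ᵥ x₀)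
    (j : ℕ) :
    sInf {t : ℝ | ∃ ξ : Fin N → ℂ,
        (∃ k ∈ krylov (P * A) r₀ j, ξ = x₀ + k) ∧
          t = enorm2 (P *ᵥ b - (P * A) *ᵥ ξ)} ≤
      cond2 R₂₂ *
        ((Polynomial.Chebyshev.T ℝ j).eval (a / d) /
          |(Polynomial.Chebyshev.T ℝ j).eval (c / d)|) *
        enorm2 r₀ := by
  subst hM hr₀
  replace hP : P = deflationProj A Z := hP
  replace hR₂₂ : R₂₂ = R.submatrix (Fin.natAddSub hmN.le) (Fin.natAddSub hmN.le) := hR₂₂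
  subst hP hR₂₂
  have hcd : 1 ≤ |c / d| := by
    rw [abs_div, abs_of_pos hd, one_le_div hd]
    exact (lt_abs_of_zero_notMem_ellipseE hda h0).le
  have hτ : (Chebyshev.T ℝ j).eval (c / d) ≠ 0 :=
    abs_pos.1 (zero_lt_one.trans_le (Chebyshev.one_le_abs_eval_T_real j hcd))
  have hβ : 0 ≤ (Chebyshev.T ℝ j).eval (a / d) / |(Chebyshev.T ℝ j).eval (c / d)| :=
    div_nonneg (zero_le_one.trans (Chebyshev.one_le_eval_T_real j ((one_le_div hd).2 hda)))
      (abs_nonneg _)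
  refine (sInf_residual_deflationProj_le hmN.le hV hA hZ hMinv hQR hQ hR b x₀
    (chebyshevResidualPoly.eval_zero c d j hτ) (chebyshevResidualPoly.natDegree_le c d j)).trans ?_
  refine mul_le_mul_of_nonneg_right (mul_le_mul_of_nonneg_left ?_ (cond2_nonneg _))
    (enorm2_nonneg _)
  exact (pi_norm_le_iff_of_nonneg hβ).2 fun i => chebyshevResidualPoly.norm_eval_le c d j hd
    (heig (Fin.natAddSub hmN.le i) (Nat.le_add_right m i))

theorem deflated_gmres_convergence_bound_ellipse
    (N m : ℕ) (hm : 1 ≤ m) (hmN : m < N)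
    (A V : Matrix (Fin N) (Fin N) ℂ) (l : Fin N → ℂ)
    (hV : IsUnit V) (hA : A = V * Matrix.diagonal l * V⁻¹)
    (Z : Matrix (Fin N) (Fin m) ℂ)
    (hZ : Z = Matrix.of fun (i : Fin N) (j : Fin m) => V i (Fin.castLE hmN.le j))
    (M : Matrix (Fin m) (Fin m) ℂ) (hM : M = Zᴴ * A * Z) (hMinv : IsUnit M)
    (P : Matrix (Fin N) (Fin N) ℂ) (hP : P = 1 - A * Z * M⁻¹ * Zᴴ)
    (Q R : Matrix (Fin N) (Fin N) ℂ)
    (hQR : V = Q * R) (hQ : Q ∈ Matrix.unitaryGroup (Fin N) ℂ)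
    (hR : R.BlockTriangular (id : Fin N → Fin N))
    (R₂₂ : Matrix (Fin (N - m)) (Fin (N - m)) ℂ)
    (hR₂₂ : R₂₂ = R.submatrix
      (fun i : Fin (N - m) => Fin.cast (Nat.add_sub_cancel' hmN.le) (Fin.natAdd m i))
      (fun i : Fin (N - m) => Fin.cast (Nat.add_sub_cancel' hmN.le) (Fin.natAdd m i)))
    (c d a : ℝ) (hd : 0 < d) (hda : d ≤ a)
    (heig : ∀ i : Fin N, m ≤ (i : ℕ) → l i ∈ ellipseE c d a)
    (h0 : (0 : ℂ) ∉ ellipseE c d a)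
    (b x₀ : Fin N → ℂ) (r₀ : Fin N → ℂ)
    (hr₀ : r₀ = P *ᵥ b - (P * A) *ᵥ x₀)
    (j : ℕ) (hj : 1 ≤ j) :
    sInf {t : ℝ | ∃ ξ : Fin N → ℂ,
        (∃ k ∈ krylov (P * A) r₀ j, ξ = x₀ + k) ∧
          t = enorm2 (P *ᵥ b - (P * A) *ᵥ ξ)} ≤
      cond2 R₂₂ *
        ((Polynomial.Chebyshev.T ℝ j).eval (a / d) /
          |(Polynomial.Chebyshev.T ℝ j).eval (c / d)|) *
        enorm2 r₀ :=
  deflated_gmres_convergence_bound_ellipse_general N m hmN A V l hV hA Z hZ M hM hMinv P hP Q R hQR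
    hQ hR R₂₂ hR₂₂ c d a hd hda heig h0 b x₀ r₀ hr₀ j
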